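/- Let χ : ℝ → ℂ belong to the Carleman class C_M{ℝ}, and suppose y ∈ C_M{ℝ} and δ : ℝ → [0,∞) satisfy |y(s) - y(s+1) - χ(s)| ≤ δ(s) for all s ∈ ℝ, where δ is periodic with period 1. Then there exists z ∈ C_M{ℝ} with z(s) - z(s+1) = χ(s) for all s ∈ ℝ and |y(s) - z(s)| ≤ (⌈(b-s)⁺⌉ + ⌈(s-a)⁺⌉)·δ(s) for all s ∈ ℝ, where x⁺ := max(x,0) and ⌈·⌉ is the ceiling function. -/

import Mathlib

open Filter Function

/-- The Carleman class `C_M{ℝ}` of smooth functions `f : ℝ → ℂ` whose derivatives satisfy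
`‖f⁽ⁿ⁾‖ ≤ C_K ρ_K^n M_n` on every compact interval `K`. -/
noncomputable def CarlemanClass (M : ℕ → ℝ) : Set (ℝ → ℂ) :=
  {f | ContDiff ℝ (⊤ : ℕ∞) f ∧ ∀ α β : ℝ, ∃ C ρ : ℝ, 0 < C ∧ 0 < ρ ∧
    ∀ n : ℕ, ∀ x ∈ Set.Icc α β, ‖iteratedDeriv n f x‖ ≤ C * ρ ^ n * M n}

/-- Nonquasianalyticity of the Carleman class `C_M{ℝ}`. -/
def Nonquasianalytic (M : ℕ → ℝ) : Prop :=
  ∃ f₀ ∈ CarlemanClass M, f₀ ≠ 0 ∧ ∃ x₀ : ℝ, ∀ n : ℕ, iteratedDeriv n f₀ x₀ = 0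

/-- The standing assumptions on the weight sequence `M` : positivity, nonquasianalyticity
of `C_M{ℝ}`, almost-increasingness of `((M_n/n!)^{1/n})_{n ≥ 1}`, `1 = M_0 ≤ M_1`,
logarithmic convexity of `(M_n/n!)`, `sup_{n ≥ 1} (M_{n+1}/((n+1) M_n))^{1/n} < ∞` and
`liminf (M_n/n!)^{1/n} > 0`. -/
def StandingAssumptions (M : ℕ → ℝ) : Prop :=
  (∀ n, 0 < M n) ∧ Nonquasianalytic M ∧
  (∃ C : ℝ, 0 < C ∧ ∀ p q : ℕ, 1 ≤ p → p ≤ q →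
    (M p / (Nat.factorial p : ℝ)) ^ ((1 : ℝ) / (p : ℝ)) ≤
      C * (M q / (Nat.factorial q : ℝ)) ^ ((1 : ℝ) / (q : ℝ))) ∧
  (M 0 = 1 ∧ M 0 ≤ M 1) ∧
  (∀ n : ℕ, (M (n + 1) / (Nat.factorial (n + 1) : ℝ)) ^ 2 ≤
    (M n / (Nat.factorial n : ℝ)) * (M (n + 2) / (Nat.factorial (n + 2) : ℝ))) ∧
  (∃ B : ℝ, ∀ n : ℕ, 1 ≤ n →
    (M (n + 1) / (((n : ℝ) + 1) * M n)) ^ ((1 : ℝ) / (n : ℝ)) ≤ B) ∧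
  (0 < Filter.liminf (fun n : ℕ => (M n / (Nat.factorial n : ℝ)) ^ ((1 : ℝ) / (n : ℝ)))
    Filter.atTop)

/-!
Put `e(s) = y(s) - y(s+1) - χ(s)`, so that `‖e‖ ≤ δ`. Log-convexity of `M_n / n!` makes `C_M{ℝ}`
closed under products (Leibniz rule), and nonquasianalyticity then yields a step function
`H ∈ C_M{ℝ}` with `0 ≤ H ≤ 1`, `H = 0` on `(-∞, a]` and `H = 1` on `[b, ∞)`: cut a flat function
off at its flat point, square it into a bump and integrate. Now `u = (1 - H) e` vanishes on
`[b, ∞)` and `v = H e` on `(-∞, a]`, so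
`w(s) = ∑_{k ≥ 0} u(s + k) - ∑_{k ≥ 1} v(s - k)`
is locally a finite sum of translates, hence lies in `C_M{ℝ}`, and it telescopes to
`w(s) - w(s+1) = u(s) + v(s) = e(s)`. Take `z = y - w`: at `s` the two sums have at most
`⌈(b-s)⁺⌉` and `⌈(s-a)⁺⌉` nonzero terms, each of norm at most `δ(s)` by periodicity.
-/

theorem mul_le_apply_add_of_sq_le_mul {a : ℕ → ℝ} (hpos : ∀ n, 0 < a n) (h0 : a 0 ≤ 1)
    (hlc : ∀ n, a (n + 1) ^ 2 ≤ a n * a (n + 2)) (j k : ℕ) : a j * a k ≤ a (j + k) := by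
  set r : ℕ → ℝ := fun n => a (n + 1) / a n
  -- log-convexity says exactly that the ratios `a (n + 1) / a n` increase
  have hr : Monotone r := by
    refine monotone_nat_of_le_succ fun n => ?_
    rw [div_le_div_iff₀ (hpos _) (hpos _)]
    nlinarith [hlc n]
  have hsucc : ∀ n, a (n + 1) = r n * a n := fun n => (div_mul_cancel₀ _ (hpos n).ne').symm
  induction j with
  | zero => simpa using mul_le_of_le_one_left (hpos k).le h0
  | succ j ih =>
    calc a (j + 1) * a k = r j * (a j * a k) := by rw [hsucc j, mul_assoc]
      _ ≤ r j * a (j + k) := mul_le_mul_of_nonneg_left ih (div_pos (hpos _) (hpos _)).le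
      _ ≤ r (j + k) * a (j + k) :=
        mul_le_mul_of_nonneg_right (hr (Nat.le_add_right j k)) (hpos _).le
      _ = a (j + 1 + k) := by rw [← hsucc, Nat.add_right_comm]

namespace StandingAssumptions

variable {M : ℕ → ℝ}

theorem choose_mul_le (hM : StandingAssumptions M) {n j : ℕ} (hj : j ≤ n) :
    (n.choose j : ℝ) * (M j * M (n - j)) ≤ M n := by
  obtain ⟨hpos, -, -, ⟨hM0, -⟩, hlc, -, -⟩ := hM
  have key := mul_le_apply_add_of_sq_le_mul (a := fun n => M n / (n.factorial : ℝ))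
    (fun n => div_pos (hpos n) (by positivity)) (by simp [hM0]) hlc j (n - j)
  have hfact : (n.choose j : ℝ) * j.factorial * (n - j).factorial = n.factorial := by
    exact_mod_cast Nat.choose_mul_factorial_mul_factorial hj
  have hjn : (0 : ℝ) < j.factorial * (n - j).factorial := by positivity
  simp only [Nat.add_sub_cancel' hj] at key
  rw [div_mul_div_comm, div_le_div_iff₀ hjn (by positivity), ← hfact] at key
  exact le_of_mul_le_mul_right (by linarith) hjn

theorem monotone (hM : StandingAssumptions M) : Monotone M := by
  refine monotone_nat_of_le_succ fun n => ?_
  have h := hM.choose_mul_le (Nat.le_add_left 1 n)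
  obtain ⟨hpos, -, -, ⟨hM0, hM01⟩, -⟩ := hM
  simp only [Nat.choose_one_right, Nat.add_sub_cancel, Nat.cast_add, Nat.cast_one] at h
  nlinarith [mul_nonneg (n.cast_nonneg : (0 : ℝ) ≤ n) (mul_pos (hpos 1) (hpos n)).le, hpos n]

end StandingAssumptions

open Set Topology

namespace CarlemanClass

variable {M : ℕ → ℝ} {f g : ℝ → ℂ}

theorem contDiff_nat (hf : f ∈ CarlemanClass M) (n : ℕ) : ContDiff ℝ n f :=
  contDiff_infty.1 hf.1 n

theorem exists_pow_bound (hM : ∀ n, 0 ≤ M n) (hf : f ∈ CarlemanClass M) (α β : ℝ) :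
    ∃ K, 1 ≤ K ∧ ∀ n, ∀ x ∈ Icc α β, ‖iteratedDeriv n f x‖ ≤ K ^ (n + 1) * M n := by
  obtain ⟨C, ρ, hC, hρ, h⟩ := hf.2 α β
  refine ⟨max 1 (max C ρ), le_max_left _ _, fun n x hx => (h n x hx).trans ?_⟩
  refine mul_le_mul_of_nonneg_right ?_ (hM n)
  rw [pow_succ']
  gcongr
  · exact le_max_of_le_right (le_max_left _ _)
  · exact le_max_of_le_right (le_max_right _ _)

theorem of_pow_bound (hf : ContDiff ℝ (⊤ : ℕ∞) f)
    (h : ∀ α β : ℝ, ∃ K, 0 < K ∧ ∀ n, ∀ x ∈ Icc α β, ‖iteratedDeriv n f x‖ ≤ K ^ (n + 1) * M n) :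
    f ∈ CarlemanClass M := by
  refine ⟨hf, fun α β => ?_⟩
  obtain ⟨K, hK, hb⟩ := h α β
  exact ⟨K, K, hK, hK, fun n x hx => by simpa only [pow_succ', mul_assoc] using hb n x hx⟩

theorem zero_mem (hM : ∀ n, 0 ≤ M n) : (0 : ℝ → ℂ) ∈ CarlemanClass M :=
  ⟨contDiff_const, fun _ _ => ⟨1, 1, one_pos, one_pos, fun n _ _ => by
    simpa [iteratedDeriv_const] using hM n⟩⟩

theorem add_mem (hM : ∀ n, 0 ≤ M n) (hf : f ∈ CarlemanClass M) (hg : g ∈ CarlemanClass M) :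
    f + g ∈ CarlemanClass M := by
  refine of_pow_bound (hf.1.add hg.1) fun α β => ?_
  obtain ⟨K₁, hK₁, hf'⟩ := exists_pow_bound hM hf α β
  obtain ⟨K₂, hK₂, hg'⟩ := exists_pow_bound hM hg α β
  refine ⟨K₁ + K₂, by linarith, fun n x hx => ?_⟩
  rw [iteratedDeriv_add (contDiff_nat hf n).contDiffAt (contDiff_nat hg n).contDiffAt]
  calc _ ≤ ‖iteratedDeriv n f x‖ + ‖iteratedDeriv n g x‖ := norm_add_le _ _
    _ ≤ (K₁ ^ (n + 1) + K₂ ^ (n + 1)) * M n := by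
      rw [add_mul]; exact add_le_add (hf' n x hx) (hg' n x hx)
    _ ≤ (K₁ + K₂) ^ (n + 1) * M n := by
      gcongr
      · exact hM n
      · exact pow_add_pow_le (by linarith) (by linarith) n.succ_ne_zero

theorem neg_mem (hf : f ∈ CarlemanClass M) : -f ∈ CarlemanClass M := by
  refine ⟨hf.1.neg, fun α β => ?_⟩
  obtain ⟨C, ρ, hC, hρ, h⟩ := hf.2 α β
  exact ⟨C, ρ, hC, hρ, fun n x hx => by simpa using h n x hx⟩

theorem sub_mem (hM : ∀ n, 0 ≤ M n) (hf : f ∈ CarlemanClass M) (hg : g ∈ CarlemanClass M) :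
    f - g ∈ CarlemanClass M :=
  sub_eq_add_neg f g ▸ add_mem hM hf (neg_mem hg)

theorem sum_mem (hM : ∀ n, 0 ≤ M n) {ι : Type*} {s : Finset ι} {F : ι → ℝ → ℂ}
    (hF : ∀ i ∈ s, F i ∈ CarlemanClass M) : (fun x => ∑ i ∈ s, F i x) ∈ CarlemanClass M := by
  rw [← Finset.sum_fn]
  exact Finset.sum_induction F (· ∈ CarlemanClass M) (fun _ _ => add_mem hM) (zero_mem hM) hF

theorem const_smul_mem (c : ℂ) (hf : f ∈ CarlemanClass M) :
    c • f ∈ CarlemanClass M := by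
  refine ⟨hf.1.const_smul c, fun α β => ?_⟩
  obtain ⟨C, ρ, hC, hρ, h⟩ := hf.2 α β
  refine ⟨(‖c‖ + 1) * C, ρ, by positivity, hρ, fun n x hx => ?_⟩
  rw [iteratedDeriv_const_smul_field, norm_smul]
  calc ‖c‖ * ‖iteratedDeriv n f x‖ ≤ (‖c‖ + 1) * (C * ρ ^ n * M n) :=
        mul_le_mul (by linarith) (h n x hx) (norm_nonneg _) (by positivity)
    _ = (‖c‖ + 1) * C * ρ ^ n * M n := by ring

theorem mul_mem (hM : ∀ n, 0 ≤ M n)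
    (hchoose : ∀ n j : ℕ, j ≤ n → (n.choose j : ℝ) * (M j * M (n - j)) ≤ M n)
    (hf : f ∈ CarlemanClass M) (hg : g ∈ CarlemanClass M) : f * g ∈ CarlemanClass M := by
  refine of_pow_bound (hf.1.mul hg.1) fun α β => ?_
  obtain ⟨K₁, hK₁, hf'⟩ := exists_pow_bound hM hf α β
  obtain ⟨K₂, hK₂, hg'⟩ := exists_pow_bound hM hg α β
  refine ⟨2 * (K₁ * K₂), by positivity, fun n x hx => ?_⟩
  rw [iteratedDeriv_mul (contDiff_nat hf n).contDiffAt (contDiff_nat hg n).contDiffAt]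
  have hterm : ∀ i ∈ Finset.range (n + 1),
      ‖(n.choose i : ℂ) * iteratedDeriv i f x * iteratedDeriv (n - i) g x‖ ≤
        (K₁ * K₂) ^ (n + 1) * M n := by
    intro i hi
    have hin : i ≤ n := Nat.lt_succ_iff.1 (Finset.mem_range.1 hi)
    rw [norm_mul, norm_mul, Complex.norm_natCast]
    calc _ ≤ (n.choose i : ℝ) * (K₁ ^ (i + 1) * M i) * (K₂ ^ (n - i + 1) * M (n - i)) :=
          mul_le_mul (mul_le_mul_of_nonneg_left (hf' i x hx) (Nat.cast_nonneg _))
            (hg' (n - i) x hx) (norm_nonneg _)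
            (mul_nonneg (Nat.cast_nonneg _) (mul_nonneg (by positivity) (hM i)))
      _ = K₁ ^ (i + 1) * K₂ ^ (n - i + 1) * ((n.choose i : ℝ) * (M i * M (n - i))) := by ring
      _ ≤ K₁ ^ (n + 1) * K₂ ^ (n + 1) * M n :=
          mul_le_mul (mul_le_mul (pow_le_pow_right₀ hK₁ (by omega))
              (pow_le_pow_right₀ hK₂ (by omega)) (by positivity) (by positivity))
            (hchoose n i hin) (mul_nonneg (Nat.cast_nonneg _) (mul_nonneg (hM i) (hM _)))
            (by positivity)
      _ = (K₁ * K₂) ^ (n + 1) * M n := by rw [mul_pow]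
  calc _ ≤ ∑ i ∈ Finset.range (n + 1), (K₁ * K₂) ^ (n + 1) * M n :=
        (norm_sum_le _ _).trans (Finset.sum_le_sum hterm)
    _ = (n + 1 : ℕ) * ((K₁ * K₂) ^ (n + 1) * M n) := by simp
    _ ≤ 2 ^ (n + 1) * ((K₁ * K₂) ^ (n + 1) * M n) := by
        gcongr
        · exact mul_nonneg (by positivity) (hM n)
        · exact_mod_cast (Nat.lt_two_pow_self).le
    _ = (2 * (K₁ * K₂)) ^ (n + 1) * M n := by ring

theorem conj_mem (hf : f ∈ CarlemanClass M) :
    (fun x => (starRingEnd ℂ) (f x)) ∈ CarlemanClass M := by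
  refine ⟨Complex.conjLIE.contDiff.comp hf.1, fun α β => ?_⟩
  obtain ⟨C, ρ, hC, hρ, h⟩ := hf.2 α β
  refine ⟨C, ρ, hC, hρ, fun n x hx => ?_⟩
  have hconj : (fun x => (starRingEnd ℂ) (f x)) = Complex.conjLIE ∘ f := rfl
  rw [← norm_iteratedFDeriv_eq_norm_iteratedDeriv, hconj,
    LinearIsometryEquiv.norm_iteratedFDeriv_comp_left, norm_iteratedFDeriv_eq_norm_iteratedDeriv]
  exact h n x hx

theorem normSq_mem (hM : ∀ n, 0 ≤ M n)
    (hchoose : ∀ n j : ℕ, j ≤ n → (n.choose j : ℝ) * (M j * M (n - j)) ≤ M n)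
    (hf : f ∈ CarlemanClass M) : (fun x => (Complex.normSq (f x) : ℂ)) ∈ CarlemanClass M := by
  have hnormSq : (fun x => (Complex.normSq (f x) : ℂ)) = f * fun x => (starRingEnd ℂ) (f x) :=
    funext fun x => (Complex.mul_conj (f x)).symm
  exact hnormSq ▸ mul_mem hM hchoose hf (conj_mem hf)

theorem comp_add_const_mem (hf : f ∈ CarlemanClass M) (d : ℝ) :
    (fun x => f (x + d)) ∈ CarlemanClass M := by
  refine ⟨hf.1.comp (contDiff_id.add contDiff_const), fun α β => ?_⟩
  obtain ⟨C, ρ, hC, hρ, h⟩ := hf.2 (α + d) (β + d)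
  refine ⟨C, ρ, hC, hρ, fun n x hx => ?_⟩
  rw [iteratedDeriv_comp_add_const]
  exact h n _ ⟨by linarith [hx.1], by linarith [hx.2]⟩

theorem comp_const_sub_mem (hf : f ∈ CarlemanClass M) (d : ℝ) :
    (fun x => f (d - x)) ∈ CarlemanClass M := by
  refine ⟨hf.1.comp (contDiff_const.sub contDiff_id), fun α β => ?_⟩
  obtain ⟨C, ρ, hC, hρ, h⟩ := hf.2 (d - β) (d - α)
  refine ⟨C, ρ, hC, hρ, fun n x hx => ?_⟩
  rw [iteratedDeriv_comp_const_sub, norm_smul, norm_pow, norm_neg, norm_one, one_pow, one_mul]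
  exact h n _ ⟨by linarith [hx.2], by linarith [hx.1]⟩

theorem comp_const_mul_mem (hf : f ∈ CarlemanClass M) (c : ℝ) :
    (fun x => f (c * x)) ∈ CarlemanClass M := by
  refine ⟨hf.1.comp (contDiff_const.mul contDiff_id), fun α β => ?_⟩
  obtain ⟨C, ρ, hC, hρ, h⟩ := hf.2 (-(|c| * max |α| |β|)) (|c| * max |α| |β|)
  refine ⟨C, ρ * (|c| + 1), hC, by positivity, fun n x hx => ?_⟩
  have hcx : |c * x| ≤ |c| * max |α| |β| := by
    rw [abs_mul]; gcongr; exact abs_le_max_abs_abs hx.1 hx.2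
  rw [iteratedDeriv_comp_const_smul (contDiff_nat hf n), norm_smul, norm_pow, Real.norm_eq_abs]
  calc |c| ^ n * ‖iteratedDeriv n f (c * x)‖ ≤ (|c| + 1) ^ n * (C * ρ ^ n * M n) :=
        mul_le_mul (pow_le_pow_left₀ (abs_nonneg c) (by linarith) n) (h n _ (abs_le.1 hcx))
          (norm_nonneg _) (by positivity)
    _ = C * (ρ * (|c| + 1)) ^ n * M n := by rw [mul_pow]; ring

theorem of_forall_eqOn_Ioo (h : ∀ R : ℝ, ∃ g ∈ CarlemanClass M, EqOn f g (Ioo (-R) R)) :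
    f ∈ CarlemanClass M := by
  have hnhds : ∀ {x R : ℝ}, |x| < R → ∀ {g}, EqOn f g (Ioo (-R) R) → f =ᶠ[𝓝 x] g :=
    fun hx _ hfg => eventuallyEq_of_mem (isOpen_Ioo.mem_nhds (abs_lt.1 hx)) hfg
  refine ⟨contDiff_iff_contDiffAt.2 fun x => ?_, fun α β => ?_⟩
  · obtain ⟨g, hg, hfg⟩ := h (|x| + 1)
    exact hg.1.contDiffAt.congr_of_eventuallyEq (hnhds (lt_add_one _) hfg)
  · obtain ⟨g, hg, hfg⟩ := h (max |α| |β| + 1)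
    obtain ⟨C, ρ, hC, hρ, hb⟩ := hg.2 α β
    refine ⟨C, ρ, hC, hρ, fun n x hx => ?_⟩
    have hx' : |x| < max |α| |β| + 1 := (abs_le_max_abs_abs hx.1 hx.2).trans_lt (lt_add_one _)
    rw [(hnhds hx' hfg).iteratedDeriv_eq n]
    exact hb n x hx

end CarlemanClass

section Flat

variable {f f' : ℝ → ℂ} {x₀ : ℝ}

theorem hasDerivAt_indicator_Ici (hf : ∀ x, HasDerivAt f (f' x) x) (h₀ : f x₀ = 0)
    (h₀' : f' x₀ = 0) (x : ℝ) :
    HasDerivAt ((Ici x₀).indicator f) ((Ici x₀).indicator f' x) x := by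
  rcases lt_trichotomy x x₀ with hx | rfl | hx
  · rw [indicator_of_notMem (notMem_Ici.2 hx)]
    refine (hasDerivAt_const x 0).congr_of_eventuallyEq ?_
    filter_upwards [Iio_mem_nhds hx] with y hy
    exact indicator_of_notMem (notMem_Ici.2 hy) f
  · rw [indicator_of_mem self_mem_Ici, h₀']
    have hleft : HasDerivWithinAt ((Ici x).indicator f) 0 (Iic x) x :=
      (hasDerivWithinAt_const x _ 0).congr (fun y hy => by
        rcases (mem_Iic.1 hy).lt_or_eq with hy | rfl
        · exact indicator_of_notMem (notMem_Ici.2 hy) f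
        · rw [indicator_of_mem self_mem_Ici, h₀]) (by rw [indicator_of_mem self_mem_Ici, h₀])
    have hright : HasDerivWithinAt ((Ici x).indicator f) 0 (Ici x) x :=
      (h₀' ▸ (hf x).hasDerivWithinAt).congr (fun y hy => indicator_of_mem hy f)
        (indicator_of_mem self_mem_Ici f)
    simpa only [Iic_union_Ici, hasDerivWithinAt_univ] using hleft.union hright
  · rw [indicator_of_mem (mem_Ici.2 hx.le)]
    refine (hf x).congr_of_eventuallyEq ?_
    filter_upwards [Ioi_mem_nhds hx] with y hy
    exact indicator_of_mem (mem_Ici.2 (le_of_lt hy)) f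

theorem hasDerivAt_iteratedDeriv (hf : ContDiff ℝ (⊤ : ℕ∞) f) (n : ℕ) (x : ℝ) :
    HasDerivAt (iteratedDeriv n f) (iteratedDeriv (n + 1) f x) x := by
  rw [iteratedDeriv_succ]
  exact (hf.differentiable_iteratedDeriv n (by exact_mod_cast ENat.natCast_lt_top n) x).hasDerivAt

theorem iteratedDeriv_indicator_Ici (hf : ContDiff ℝ (⊤ : ℕ∞) f)
    (hflat : ∀ n, iteratedDeriv n f x₀ = 0) (n : ℕ) :
    iteratedDeriv n ((Ici x₀).indicator f) = (Ici x₀).indicator (iteratedDeriv n f) := by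
  induction n with
  | zero => simp only [iteratedDeriv_zero]
  | succ n ih =>
    rw [iteratedDeriv_succ, ih]
    exact funext fun x => (hasDerivAt_indicator_Ici (hasDerivAt_iteratedDeriv hf n) (hflat n)
      (hflat (n + 1)) x).deriv

theorem contDiff_indicator_Ici (hf : ContDiff ℝ (⊤ : ℕ∞) f)
    (hflat : ∀ n, iteratedDeriv n f x₀ = 0) : ContDiff ℝ (⊤ : ℕ∞) ((Ici x₀).indicator f) :=
  contDiff_of_differentiable_iteratedDeriv fun n _ => by
    rw [iteratedDeriv_indicator_Ici hf hflat n]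
    exact fun x => (hasDerivAt_indicator_Ici (hasDerivAt_iteratedDeriv hf n) (hflat n)
      (hflat (n + 1)) x).differentiableAt

theorem CarlemanClass.indicator_Ici_mem {M : ℕ → ℝ} (hf : f ∈ CarlemanClass M)
    (hflat : ∀ n, iteratedDeriv n f x₀ = 0) : (Ici x₀).indicator f ∈ CarlemanClass M := by
  refine ⟨contDiff_indicator_Ici hf.1 hflat, fun α β => ?_⟩
  obtain ⟨C, ρ, hC, hρ, h⟩ := hf.2 α β
  refine ⟨C, ρ, hC, hρ, fun n x hx => ?_⟩
  rw [iteratedDeriv_indicator_Ici hf.1 hflat]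
  exact norm_indicator_le_norm_self _ _ |>.trans (h n x hx)

end Flat

theorem CarlemanClass.primitive_mem {M : ℕ → ℝ} (hM₀ : 0 < M 0) (hmono : Monotone M)
    {f : ℝ → ℂ} (hf : f ∈ CarlemanClass M) (c : ℝ) :
    (fun x => ∫ t in c..x, f t) ∈ CarlemanClass M := by
  have hM : ∀ n, 0 ≤ M n := fun n => hM₀.le.trans (hmono n.zero_le)
  have hderiv : deriv (fun x => ∫ t in c..x, f t) = f :=
    funext fun x => hf.1.continuous.deriv_integral f c x
  have hdiff : Differentiable ℝ (fun x => ∫ t in c..x, f t) := fun x =>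
    (hf.1.continuous.integral_hasStrictDerivAt c x).hasDerivAt.differentiableAt
  have hsmooth : ContDiff ℝ (⊤ : ℕ∞) (fun x => ∫ t in c..x, f t) :=
    contDiff_infty_iff_deriv.2 ⟨hdiff, by rw [hderiv]; exact hf.1⟩
  refine of_pow_bound hsmooth fun α β => ?_
  obtain ⟨K, hK, hb⟩ := exists_pow_bound hM hf α β
  obtain ⟨C₀, hC₀⟩ := isCompact_Icc.exists_bound_of_continuousOn hsmooth.continuous.continuousOn
  refine ⟨max K (C₀ / M 0), by positivity, fun n x hx => ?_⟩
  cases n with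
  | zero =>
    rw [iteratedDeriv_zero, zero_add, pow_one, ← div_le_iff₀ hM₀]
    exact (div_le_div_of_nonneg_right (hC₀ x hx) hM₀.le).trans (le_max_right _ _)
  | succ n =>
    rw [iteratedDeriv_succ', hderiv]
    calc ‖iteratedDeriv n f x‖ ≤ K ^ (n + 1) * M n := hb n x hx
      _ ≤ max K (C₀ / M 0) ^ (n + 1 + 1) * M (n + 1) := by
        gcongr
        · exact hM _
        · exact (pow_le_pow_right₀ hK (Nat.le_succ _)).trans
            (pow_le_pow_left₀ (by linarith) (le_max_left _ _) _)
        · exact hmono n.le_succ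

section ShiftSums

noncomputable def forwardSum (h : ℝ → ℂ) (s : ℝ) : ℂ := ∑' k : ℕ, h (s + k)

noncomputable def backwardSum (h : ℝ → ℂ) (s : ℝ) : ℂ := ∑' k : ℕ, h (s - (k + 1))

variable {h : ℝ → ℂ} {a b : ℝ}

theorem forwardSum_eq_sum (hb : ∀ t, b ≤ t → h t = 0) {s : ℝ} {m : ℕ} (hm : b - s ≤ m) :
    forwardSum h s = ∑ k ∈ Finset.range m, h (s + k) :=
  tsum_eq_sum fun k hk => hb _ <| by
    have : (m : ℝ) ≤ k := by exact_mod_cast not_lt.1 (Finset.mem_range.not.1 hk)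
    linarith

theorem forwardSum_sub_forwardSum_add_one (hb : ∀ t, b ≤ t → h t = 0) (s : ℝ) :
    forwardSum h s - forwardSum h (s + 1) = h s := by
  have hm : b - s ≤ (⌈b - s⌉₊ : ℝ) := Nat.le_ceil _
  rw [forwardSum_eq_sum hb (m := ⌈b - s⌉₊ + 1) (by push_cast; linarith),
    forwardSum_eq_sum hb (m := ⌈b - s⌉₊) (by linarith), Finset.sum_range_succ']
  simp only [Nat.cast_add, Nat.cast_one, Nat.cast_zero, add_zero, add_assoc, add_comm (1 : ℝ)]
  ring

theorem norm_forwardSum_le (hb : ∀ t, b ≤ t → h t = 0) {δ : ℝ → ℝ} (hδ : ∀ t, ‖h t‖ ≤ δ t)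
    (hper : Periodic δ 1) {s : ℝ} {m : ℕ} (hm : b - s ≤ m) :
    ‖forwardSum h s‖ ≤ m * δ s := by
  rw [forwardSum_eq_sum hb hm]
  calc _ ≤ ∑ k ∈ Finset.range m, ‖h (s + k)‖ := norm_sum_le _ _
    _ ≤ ∑ _k ∈ Finset.range m, δ s :=
      Finset.sum_le_sum fun k _ => (hδ _).trans (by simpa using (hper.nat_mul k) s |>.le)
    _ = m * δ s := by simp

theorem CarlemanClass.forwardSum_mem {M : ℕ → ℝ} (hM : ∀ n, 0 ≤ M n) (hh : h ∈ CarlemanClass M)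
    (hb : ∀ t, b ≤ t → h t = 0) : forwardSum h ∈ CarlemanClass M :=
  of_forall_eqOn_Ioo fun R =>
    ⟨fun s => ∑ k ∈ Finset.range ⌈b + R⌉₊, h (s + k),
      sum_mem hM fun k _ => comp_add_const_mem hh k,
      fun s hs => forwardSum_eq_sum hb (by linarith [hs.1, Nat.le_ceil (b + R)])⟩

theorem backwardSum_eq_forwardSum (h : ℝ → ℂ) (s : ℝ) :
    backwardSum h s = forwardSum (fun t => h (-t)) (1 - s) := by
  unfold backwardSum forwardSum
  congr 1
  ext k
  ring_nf

theorem backwardSum_add_one_sub_backwardSum (ha : ∀ t, t ≤ a → h t = 0) (s : ℝ) :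
    backwardSum h (s + 1) - backwardSum h s = h s := by
  have hb : ∀ t, -a ≤ t → h (-t) = 0 := fun t ht => ha _ (by linarith)
  rw [backwardSum_eq_forwardSum, backwardSum_eq_forwardSum, show 1 - s = 1 - (s + 1) + 1 by ring,
    forwardSum_sub_forwardSum_add_one hb]
  simp

theorem norm_backwardSum_le (ha : ∀ t, t ≤ a → h t = 0) {δ : ℝ → ℝ} (hδ : ∀ t, ‖h t‖ ≤ δ t)
    (hper : Periodic δ 1) {s : ℝ} {m : ℕ} (hm : s - a - 1 ≤ m) :
    ‖backwardSum h s‖ ≤ m * δ s := by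
  have hb : ∀ t, -a ≤ t → h (-t) = 0 := fun t ht => ha _ (by linarith)
  have hper' : Periodic (fun t => δ (-t)) 1 := fun t => by
    simpa [neg_add_eq_sub] using (hper (-t - 1)).symm
  rw [backwardSum_eq_forwardSum]
  simpa [hper.sub_eq] using
    norm_forwardSum_le hb (fun t => hδ (-t)) hper' (s := 1 - s) (by linarith)

theorem CarlemanClass.backwardSum_mem {M : ℕ → ℝ} (hM : ∀ n, 0 ≤ M n)
    (hh : h ∈ CarlemanClass M) (ha : ∀ t, t ≤ a → h t = 0) : backwardSum h ∈ CarlemanClass M := by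
  have hreflect : (fun t => h (-t)) ∈ CarlemanClass M := by
    simpa using comp_const_sub_mem hh 0
  rw [show backwardSum h = fun s => forwardSum (fun t => h (-t)) (1 - s) from
    funext (backwardSum_eq_forwardSum h)]
  exact comp_const_sub_mem (forwardSum_mem hM hreflect (b := -a) fun t ht => ha _ (by linarith)) 1

end ShiftSums

section Cutoff

variable {M : ℕ → ℝ}

theorem Nonquasianalytic.exists_flat_lt (hnq : Nonquasianalytic M) :
    ∃ f ∈ CarlemanClass M, ∃ x₀ x₁ : ℝ, x₀ < x₁ ∧ (∀ n, iteratedDeriv n f x₀ = 0) ∧ f x₁ ≠ 0 := by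
  obtain ⟨f, hf, hne, x₀, hflat⟩ := hnq
  obtain ⟨x₁, hx₁⟩ := Function.ne_iff.1 hne
  have hx₁₀ : x₁ ≠ x₀ := by
    rintro rfl
    exact hx₁ (by simpa using hflat 0)
  rcases hx₁₀.lt_or_gt with hlt | hlt
  · refine ⟨fun x => f (2 * x₀ - x), CarlemanClass.comp_const_sub_mem hf (2 * x₀),
      x₀, 2 * x₀ - x₁, by linarith, fun n => ?_, by simpa using hx₁⟩
    simp [iteratedDeriv_comp_const_sub, two_mul, hflat n]
  · exact ⟨f, hf, x₀, x₁, hlt, hflat, hx₁⟩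

theorem Nonquasianalytic.exists_bump (hM : ∀ n, 0 ≤ M n)
    (hchoose : ∀ n j : ℕ, j ≤ n → (n.choose j : ℝ) * (M j * M (n - j)) ≤ M n)
    (hnq : Nonquasianalytic M) :
    ∃ ρ : ℝ → ℝ, (fun x => (ρ x : ℂ)) ∈ CarlemanClass M ∧ (∀ x, 0 ≤ ρ x) ∧
      ∃ p q : ℝ, p < q ∧ (∀ x ∉ Ioo p q, ρ x = 0) ∧ 0 < ∫ x in p..q, ρ x := by
  obtain ⟨f, hf, x₀, x₁, hlt, hflat, hfx₁⟩ := hnq.exists_flat_lt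
  set g := (Ici x₀).indicator f
  have hg : g ∈ CarlemanClass M := CarlemanClass.indicator_Ici_mem hf hflat
  have hg₀ : ∀ x ≤ x₀, g x = 0 := fun x hx => by
    rcases hx.lt_or_eq with hx | rfl
    · exact indicator_of_notMem (notMem_Ici.2 hx) f
    · simpa [g] using hflat 0
  have hgx₁ : g x₁ ≠ 0 := by simpa [g, indicator_of_mem (mem_Ici.2 hlt.le)] using hfx₁
  -- `|g(x)|² |g(2x₁ - x)|²` vanishes outside `(x₀, 2x₁ - x₀)` and is positive at `x₁`
  set ρ : ℝ → ℝ := fun x => Complex.normSq (g x) * Complex.normSq (g (2 * x₁ - x))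
  have hρc : Continuous ρ := by
    have := hg.1.continuous
    fun_prop
  refine ⟨ρ, ?_, fun x => mul_nonneg (Complex.normSq_nonneg _) (Complex.normSq_nonneg _),
    x₀, 2 * x₁ - x₀, by linarith, fun x hx => ?_, ?_⟩
  · have hprod : (fun x => (ρ x : ℂ)) = (fun x => (Complex.normSq (g x) : ℂ)) *
        fun x => (Complex.normSq (g (2 * x₁ - x)) : ℂ) := by
      ext x; simp [ρ]
    rw [hprod]
    have hnormSq := CarlemanClass.normSq_mem hM hchoose hg
    exact CarlemanClass.mul_mem hM hchoose hnormSq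
      (CarlemanClass.comp_const_sub_mem hnormSq (2 * x₁))
  · rcases not_and_or.1 hx with hx | hx
    · simp [ρ, hg₀ x (not_lt.1 hx)]
    · simp [ρ, hg₀ (2 * x₁ - x) (by linarith [not_lt.1 hx])]
  · refine intervalIntegral.integral_pos (by linarith) hρc.continuousOn
      (fun x _ => mul_nonneg (Complex.normSq_nonneg _) (Complex.normSq_nonneg _))
      ⟨x₁, ⟨hlt.le, by linarith⟩, ?_⟩
    have := Complex.normSq_pos.2 hgx₁
    simp only [ρ, two_mul, add_sub_cancel_right]
    positivity

theorem CarlemanClass.exists_step_of_bump (hM₀ : 0 < M 0) (hmono : Monotone M) {ρ : ℝ → ℝ}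
    (hρ : (fun x => (ρ x : ℂ)) ∈ CarlemanClass M) (hρ₀ : ∀ x, 0 ≤ ρ x) {p q : ℝ}
    (hsupp : ∀ x ∉ Ioo p q, ρ x = 0) (hI : 0 < ∫ x in p..q, ρ x) :
    ∃ H : ℝ → ℝ, (fun x => (H x : ℂ)) ∈ CarlemanClass M ∧ (∀ x ≤ p, H x = 0) ∧
      (∀ x, q ≤ x → H x = 1) ∧ ∀ x, H x ∈ Icc 0 1 := by
  have hρc : Continuous ρ := by
    simpa [Function.comp_def] using Complex.continuous_re.comp hρ.1.continuous
  set I := ∫ x in p..q, ρ x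
  set P : ℝ → ℝ := fun x => ∫ t in p..x, ρ t
  have hvanish : ∀ u v, (∀ t ∈ uIcc u v, t ∉ Ioo p q) → ∫ t in u..v, ρ t = 0 := fun u v h =>
    (intervalIntegral.integral_congr fun t ht => hsupp t (h t ht)).trans (by simp)
  have hP_left : ∀ x ≤ p, P x = 0 := fun x hx => hvanish _ _ fun t ht hpq => by
    rw [uIcc_of_ge hx] at ht; linarith [ht.2, hpq.1]
  have hP_right : ∀ x, q ≤ x → P x = I := fun x hx => by
    simp only [P]
    rw [← intervalIntegral.integral_add_adjacent_intervals (hρc.intervalIntegrable p q)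
      (hρc.intervalIntegrable q x), hvanish q x fun t ht hpq => ?_, add_zero]
    rw [uIcc_of_le hx] at ht; linarith [ht.1, hpq.2]
  refine ⟨fun x => P x / I, ?_, fun x hx => by simp [hP_left x hx],
    fun x hx => by simp [hP_right x hx, hI.ne'], fun x => ?_⟩
  · have hPI : (fun x => ((P x / I : ℝ) : ℂ)) = (I : ℂ)⁻¹ • fun x => ∫ t in p..x, (ρ t : ℂ) := by
      ext x; simp [P, intervalIntegral.integral_ofReal, div_eq_inv_mul]
    rw [hPI]
    exact const_smul_mem _ (primitive_mem hM₀ hmono hρ p)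
  · rcases le_total x p with hxp | hpx
    · simp [hP_left x hxp]
    rcases le_total q x with hqx | hxq
    · simp [hP_right x hqx, hI.ne']
    refine ⟨div_nonneg (intervalIntegral.integral_nonneg hpx fun t _ => hρ₀ t) hI.le,
      (div_le_one hI).2 ?_⟩
    exact intervalIntegral.integral_mono_interval le_rfl hpx hxq
      (Eventually.of_forall hρ₀) (hρc.intervalIntegrable p q)

theorem StandingAssumptions.exists_smoothStep (hM : StandingAssumptions M) {a b : ℝ}
    (hab : a < b) :
    ∃ H : ℝ → ℝ, (fun x => (H x : ℂ)) ∈ CarlemanClass M ∧ (∀ x ≤ a, H x = 0) ∧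
      (∀ x, b ≤ x → H x = 1) ∧ ∀ x, H x ∈ Icc 0 1 := by
  have hM₀ : 0 < M 0 := hM.1 0
  have hM_nonneg : ∀ n, 0 ≤ M n := fun n => (hM.1 n).le
  obtain ⟨ρ, hρ, hρ₀, p, q, hpq, hsupp, hI⟩ :=
    hM.2.1.exists_bump hM_nonneg fun n j hj => hM.choose_mul_le hj
  obtain ⟨H, hH, hH_left, hH_right, hH_range⟩ :=
    CarlemanClass.exists_step_of_bump hM₀ hM.monotone hρ hρ₀ hsupp hI
  set κ := (q - p) / (b - a)
  have hκ : 0 < κ := div_pos (by linarith) (by linarith)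
  have hκb : κ * b + (p - κ * a) = q := by
    have : b - a ≠ 0 := by linarith
    simp only [κ]; field_simp; ring
  refine ⟨fun x => H (κ * x + (p - κ * a)),
    CarlemanClass.comp_const_mul_mem (CarlemanClass.comp_add_const_mem hH (p - κ * a)) κ,
    fun x hx => hH_left _ (by nlinarith), fun x hx => hH_right _ (by nlinarith),
    fun x => hH_range _⟩

end Cutoff

theorem StandingAssumptions.exists_difference_solution {M : ℕ → ℝ} (hM : StandingAssumptions M)
    {a b : ℝ} (hab : a < b) {e : ℝ → ℂ} (he : e ∈ CarlemanClass M) {δ : ℝ → ℝ}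
    (heδ : ∀ t, ‖e t‖ ≤ δ t) (hper : Periodic δ 1) :
    ∃ w ∈ CarlemanClass M, (∀ s, w s - w (s + 1) = e s) ∧
      ∀ s, ‖w s‖ ≤ ((⌈b - s⌉₊ : ℝ) + ⌈s - a⌉₊) * δ s := by
  have hM_nonneg : ∀ n, 0 ≤ M n := fun n => (hM.1 n).le
  obtain ⟨H, hH, hH_left, hH_right, hH_range⟩ := hM.exists_smoothStep hab
  have hscaled : ∀ r ∈ Icc (0 : ℝ) 1, ∀ t, ‖(r : ℂ) * e t‖ ≤ δ t := fun r hr t => by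
    rw [norm_mul, Complex.norm_real, Real.norm_of_nonneg hr.1]
    exact (mul_le_of_le_one_left (norm_nonneg _) hr.2).trans (heδ t)
  set v : ℝ → ℂ := fun s => (H s : ℂ) * e s
  set u : ℝ → ℂ := e - v
  have hv : v ∈ CarlemanClass M :=
    CarlemanClass.mul_mem hM_nonneg (fun n j hj => hM.choose_mul_le hj) hH he
  have hu_right : ∀ t, b ≤ t → u t = 0 := fun t ht => by simp [u, v, hH_right t ht]
  have hv_left : ∀ t ≤ a, v t = 0 := fun t ht => by simp [v, hH_left t ht]
  have hu_le : ∀ t, ‖u t‖ ≤ δ t := fun t => by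
    simpa [u, v, sub_mul] using hscaled (1 - H t)
      ⟨by linarith [(hH_range t).2], by linarith [(hH_range t).1]⟩ t
  refine ⟨forwardSum u - backwardSum v, CarlemanClass.sub_mem hM_nonneg
      (CarlemanClass.forwardSum_mem hM_nonneg (CarlemanClass.sub_mem hM_nonneg he hv) hu_right)
      (CarlemanClass.backwardSum_mem hM_nonneg hv hv_left), fun s => ?_, fun s => ?_⟩
  · have hu_tel := forwardSum_sub_forwardSum_add_one hu_right s
    have hv_tel := backwardSum_add_one_sub_backwardSum hv_left s
    simp only [Pi.sub_apply, u] at hu_tel ⊢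
    linear_combination hu_tel + hv_tel
  · rw [add_mul]
    exact (norm_sub_le _ _).trans <| add_le_add
      (norm_forwardSum_le hu_right hu_le hper (Nat.le_ceil _))
      (norm_backwardSum_le hv_left (fun t => hscaled _ (hH_range t) t) hper
        (by linarith [Nat.le_ceil (s - a)]))

theorem natCast_ceil_eq_intCast_ceil_max (x : ℝ) : (⌈x⌉₊ : ℝ) = ((⌈max x 0⌉ : ℤ) : ℝ) := by
  rcases le_total x 0 with hx | hx
  · simp [Nat.ceil_eq_zero.2 hx, max_eq_right hx]
  · rw [max_eq_left hx, ← Int.natCast_ceil_eq_ceil hx, Int.cast_natCast]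

theorem ggs_difference_equation_periodic_general
    (a b : ℝ) (hab : a < b) (M : ℕ → ℝ) (hM : StandingAssumptions M)
    (χ : ℝ → ℂ) (hχM : χ ∈ CarlemanClass M)
    (y : ℝ → ℂ) (hy : y ∈ CarlemanClass M)
    (δ : ℝ → ℝ)
    (hδper : ∀ s : ℝ, δ (s + 1) = δ s)
    (hyδ : ∀ s : ℝ, ‖y s - y (s + 1) - χ s‖ ≤ δ s) :
    ∃ z ∈ CarlemanClass M, (∀ s : ℝ, z s - z (s + 1) = χ s) ∧
      ∀ s : ℝ, ‖y s - z s‖ ≤ ((⌈max (b - s) 0⌉ + ⌈max (s - a) 0⌉ : ℤ) : ℝ) * δ s := by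
  have hM_nonneg : ∀ n, 0 ≤ M n := fun n => (hM.1 n).le
  have he : (fun s => y s - y (s + 1) - χ s) ∈ CarlemanClass M :=
    CarlemanClass.sub_mem hM_nonneg
      (CarlemanClass.sub_mem hM_nonneg hy (CarlemanClass.comp_add_const_mem hy 1)) hχM
  obtain ⟨w, hw, hw_eq, hw_le⟩ := hM.exists_difference_solution hab he hyδ hδper
  refine ⟨y - w, CarlemanClass.sub_mem hM_nonneg hy hw, fun s => ?_, fun s => ?_⟩
  · simp only [Pi.sub_apply]
    linear_combination -hw_eq s
  · simpa [natCast_ceil_eq_intCast_ceil_max] using hw_le s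

/-- Generalized Găvruța stability of the difference equation `f(s) - f(s+1) = χ(s)` with a
`1`-periodic control function `δ`: the error bound becomes
`(⌈(b-s)⁺⌉ + ⌈(s-a)⁺⌉)·δ(s)`. -/
theorem ggs_difference_equation_periodic
    (a b : ℝ) (hab : a < b) (M : ℕ → ℝ) (hM : StandingAssumptions M)
    (χ : ℝ → ℂ) (hχM : χ ∈ CarlemanClass M)
    (y : ℝ → ℂ) (hy : y ∈ CarlemanClass M)
    (δ : ℝ → ℝ) (hδ : ∀ s : ℝ, 0 ≤ δ s)
    (hδper : ∀ s : ℝ, δ (s + 1) = δ s)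
    (hyδ : ∀ s : ℝ, ‖y s - y (s + 1) - χ s‖ ≤ δ s) :
    ∃ z ∈ CarlemanClass M, (∀ s : ℝ, z s - z (s + 1) = χ s) ∧
      ∀ s : ℝ, ‖y s - z s‖ ≤ ((⌈max (b - s) 0⌉ + ⌈max (s - a) 0⌉ : ℤ) : ℝ) * δ s :=
  ggs_difference_equation_periodic_general a b hab M hM χ hχM y hy δ hδper hyδ
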